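/- Let H and H̃ be d×d symmetric positive definite real matrices with (1−ε)H ⪯ H̃ ⪯ (1+ε)H for some ε ∈ (0, 1), let g ∈ ℝ^d, let p* = H⁻¹g and p̃ = H̃⁻¹g, and let ε₀ ∈ (0, 1). Suppose p̃′ ∈ ℝ^d satisfies ‖H̃^{1/2}(p̃′ − p̃)‖₂ ≤ ε₀·‖H̃^{1/2}p̃‖₂, and let H^{1/2}, H̃^{1/2} be the positive semidefinite square roots of H, H̃. Then ‖H^{1/2}(p̃′ − p*)‖₂ ≤ ((ε₀ + ε)/(1−ε))·‖H^{1/2}p*‖₂. -/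

import Mathlib

/-!
Write `‖x‖_M = √(xᵀ M x)`, so that `‖M^{1/2} x‖₂ = ‖x‖_M`, and note `H̃ p̃ = g = H p*`.
Split the error as `(p̃′ - p̃) + (p̃ - p*)`. For the first part, `(1 - ε)‖x‖_H² ≤ ‖x‖_{H̃}²`
together with `‖p̃‖_{H̃}² = p̃ᵀ H p* ≤ ‖p̃‖_H ‖p*‖_H` gives `‖p̃′ - p̃‖_H ≤ ε₀ / (1 - ε) ‖p*‖_H`.
For the second, `v = p̃ - p*` solves `H̃ v = (H - H̃) p*`, so
`(1 - ε)‖v‖_H² ≤ vᵀ (H - H̃) p* ≤ ε ‖v‖_H ‖p*‖_H`. The last bound is Cauchy–Schwarz for the two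
positive semidefinite forms `H̃ - (1 - ε) H` and `(1 + ε) H - H̃`, whose difference is
`2 (H - H̃)` and whose sum is `2 ε H`.
-/

open Matrix

noncomputable section

def norm2 {d : ℕ} (x : Fin d → ℝ) : ℝ := Real.sqrt (x ⬝ᵥ x)

def Matrix.PosSemidef.sqrt {n 𝕜 : Type*} [Fintype n] [RCLike 𝕜] [PartialOrder 𝕜] [StarOrderedRing 𝕜]
    [DecidableEq n]
    {A : Matrix n n 𝕜} (hA : A.PosSemidef) : Matrix n n 𝕜 :=
  hA.1.eigenvectorUnitary.1 * diagonal ((↑) ∘ Real.sqrt ∘ hA.1.eigenvalues) *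
  (star hA.1.eigenvectorUnitary : Matrix n n 𝕜)

theorem Real.sqrt_mul_sqrt_add_sqrt_mul_sqrt_le {a b c e : ℝ} (ha : 0 ≤ a) (hb : 0 ≤ b)
    (hc : 0 ≤ c) (he : 0 ≤ e) : √a * √b + √c * √e ≤ √(a + c) * √(b + e) := by
  rw [← Real.sqrt_mul (add_nonneg ha hc)]
  apply Real.le_sqrt_of_sq_le
  nlinarith [sq_nonneg (√a * √e - √c * √b), Real.sq_sqrt ha, Real.sq_sqrt hb, Real.sq_sqrt hc,
    Real.sq_sqrt he]

theorem mul_le_of_mul_sq_le_mul {a b s : ℝ} (hs : 0 ≤ s) (hb : 0 ≤ b) (h : a * s ^ 2 ≤ b * s) :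
    a * s ≤ b := by
  rcases hs.eq_or_lt with rfl | hs
  · simpa using hb
  · exact le_of_mul_le_mul_right (by linarith) hs

theorem Matrix.PosDef.mulVec_inv_mulVec {K n : Type*} [Field K] [PartialOrder K] [StarRing K]
    [Fintype n] [DecidableEq n] {M : Matrix n n K} (hM : M.PosDef) (v : n → K) :
    M *ᵥ (M⁻¹ *ᵥ v) = v := by
  rw [mulVec_mulVec, mul_nonsing_inv _ ((isUnit_iff_isUnit_det M).mp hM.isUnit), one_mulVec]

namespace Matrix.PosSemidef

variable {n : Type*} [Fintype n] [DecidableEq n] {A : Matrix n n ℝ}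

theorem sqrt_isHermitian (hA : A.PosSemidef) : hA.sqrt.IsHermitian := by
  unfold Matrix.PosSemidef.sqrt
  rw [IsHermitian, conjTranspose_mul, conjTranspose_mul, diagonal_conjTranspose,
    star_eq_conjTranspose, conjTranspose_conjTranspose, Matrix.mul_assoc]
  rfl

theorem sqrt_mul_self (hA : A.PosSemidef) : hA.sqrt * hA.sqrt = A := by
  set U : Matrix n n ℝ := hA.1.eigenvectorUnitary.1
  set D : Matrix n n ℝ := diagonal ((↑) ∘ Real.sqrt ∘ hA.1.eigenvalues)
  have hU : star U * U = 1 := Unitary.coe_star_mul_self _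
  have hD : D * D = diagonal ((↑) ∘ hA.1.eigenvalues) := by
    simp only [D, diagonal_mul_diagonal, Function.comp_apply,
      Real.mul_self_sqrt (hA.eigenvalues_nonneg _)]
    rfl
  calc hA.sqrt * hA.sqrt = U * (D * (star U * U) * D) * star U := by
        simp only [Matrix.PosSemidef.sqrt, U, D, Matrix.mul_assoc]; rfl
    _ = A := by
      rw [hU, Matrix.mul_one, hD]
      exact hA.1.spectral_theorem.symm

theorem dotProduct_sqrt_mulVec_self (hA : A.PosSemidef) (x : n → ℝ) :
    (hA.sqrt *ᵥ x) ⬝ᵥ (hA.sqrt *ᵥ x) = x ⬝ᵥ A *ᵥ x := by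
  rw [dotProduct_mulVec, ← mulVec_transpose, ← conjTranspose_eq_transpose_of_trivial,
    hA.sqrt_isHermitian.eq, mulVec_mulVec, hA.sqrt_mul_self, dotProduct_comm]

end Matrix.PosSemidef

theorem Matrix.PosSemidef.norm2_sqrt_mulVec {d : ℕ} {A : Matrix (Fin d) (Fin d) ℝ}
    (hA : A.PosSemidef) (x : Fin d → ℝ) : norm2 (hA.sqrt *ᵥ x) = √(x ⬝ᵥ A *ᵥ x) := by
  rw [norm2, hA.dotProduct_sqrt_mulVec_self]

namespace Matrix

variable {n : Type*} [Fintype n]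

section PosSemidefForm

variable {A B : Matrix n n ℝ}

theorem IsHermitian.dotProduct_mulVec_comm (hA : A.IsHermitian) (x y : n → ℝ) :
    x ⬝ᵥ A *ᵥ y = y ⬝ᵥ A *ᵥ x := by
  rw [dotProduct_mulVec, ← mulVec_transpose, ← conjTranspose_eq_transpose_of_trivial, hA.eq,
    dotProduct_comm]

namespace PosSemidef

theorem dotProduct_mulVec_self_nonneg (hA : A.PosSemidef) (x : n → ℝ) : 0 ≤ x ⬝ᵥ A *ᵥ x := by
  simpa using hA.dotProduct_mulVec_nonneg x

theorem mul_dotProduct_mulVec_le_of_sub_smul {c : ℝ} (h : (A - c • B).PosSemidef) (x : n → ℝ) :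
    c * (x ⬝ᵥ B *ᵥ x) ≤ x ⬝ᵥ A *ᵥ x := by
  simpa [sub_mulVec, smul_mulVec] using h.dotProduct_mulVec_self_nonneg x

theorem dotProduct_mulVec_le_sqrt_mul_sqrt (hA : A.PosSemidef) (x y : n → ℝ) :
    x ⬝ᵥ A *ᵥ y ≤ √(x ⬝ᵥ A *ᵥ x) * √(y ⬝ᵥ A *ᵥ y) := by
  classical
  have hcs := LinearMap.BilinForm.apply_mul_apply_le_of_forall_zero_le (toLinearMap₂' ℝ A)
    (by simpa only [toLinearMap₂'_apply'] using hA.dotProduct_mulVec_self_nonneg) x y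
  simp only [toLinearMap₂'_apply', hA.1.dotProduct_mulVec_comm y x] at hcs
  rw [← Real.sqrt_mul (hA.dotProduct_mulVec_self_nonneg x)]
  exact (le_abs_self _).trans (Real.abs_le_sqrt (by rwa [sq]))

theorem sqrt_dotProduct_mulVec_add_le (hA : A.PosSemidef) (x y : n → ℝ) :
    √((x + y) ⬝ᵥ A *ᵥ (x + y)) ≤ √(x ⬝ᵥ A *ᵥ x) + √(y ⬝ᵥ A *ᵥ y) := by
  rw [Real.sqrt_le_left (by positivity)]
  have hcs := hA.dotProduct_mulVec_le_sqrt_mul_sqrt x y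
  simp only [mulVec_add, dotProduct_add, add_dotProduct, hA.1.dotProduct_mulVec_comm y x]
  nlinarith [Real.sq_sqrt (hA.dotProduct_mulVec_self_nonneg x),
    Real.sq_sqrt (hA.dotProduct_mulVec_self_nonneg y)]

theorem dotProduct_sub_mulVec_le (hA : A.PosSemidef) (hB : B.PosSemidef) (x y : n → ℝ) :
    x ⬝ᵥ (B - A) *ᵥ y ≤ √(x ⬝ᵥ (B + A) *ᵥ x) * √(y ⬝ᵥ (B + A) *ᵥ y) := by
  have hAcs := hA.dotProduct_mulVec_le_sqrt_mul_sqrt x (-y)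
  have hBcs := hB.dotProduct_mulVec_le_sqrt_mul_sqrt x y
  simp only [mulVec_neg, dotProduct_neg, neg_dotProduct, neg_neg] at hAcs
  simp only [sub_mulVec, add_mulVec, dotProduct_sub, dotProduct_add]
  linarith [Real.sqrt_mul_sqrt_add_sqrt_mul_sqrt_le (hB.dotProduct_mulVec_self_nonneg x)
    (hB.dotProduct_mulVec_self_nonneg y) (hA.dotProduct_mulVec_self_nonneg x)
    (hA.dotProduct_mulVec_self_nonneg y)]

end PosSemidef

end PosSemidefForm

section Approximation

variable {H Ht : Matrix n n ℝ} {ε : ℝ}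

theorem dotProduct_sub_mulVec_le_of_approx (hε : 0 ≤ ε) (hlow : (Ht - (1 - ε) • H).PosSemidef)
    (hup : ((1 + ε) • H - Ht).PosSemidef) (x y : n → ℝ) :
    x ⬝ᵥ (H - Ht) *ᵥ y ≤ ε * √(x ⬝ᵥ H *ᵥ x) * √(y ⬝ᵥ H *ᵥ y) := by
  have h := hlow.dotProduct_sub_mulVec_le hup x y
  rw [show (1 + ε) • H - Ht - (Ht - (1 - ε) • H) = (2 : ℝ) • (H - Ht) by module,
    show (1 + ε) • H - Ht + (Ht - (1 - ε) • H) = (2 * ε) • H by module] at h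
  simp only [smul_mulVec, dotProduct_smul, smul_eq_mul] at h
  have h2ε : 0 ≤ 2 * ε := by positivity
  rw [Real.sqrt_mul h2ε, Real.sqrt_mul h2ε, mul_mul_mul_comm, Real.mul_self_sqrt h2ε] at h
  linarith

theorem one_sub_mul_dotProduct_mulVec_le_of_mulVec_eq (hH : H.PosSemidef) (hε : ε ≤ 1)
    (hlow : (Ht - (1 - ε) • H).PosSemidef) {u w : n → ℝ} (huw : Ht *ᵥ u = H *ᵥ w) :
    (1 - ε) * (u ⬝ᵥ Ht *ᵥ u) ≤ w ⬝ᵥ H *ᵥ w := by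
  have hcs : u ⬝ᵥ Ht *ᵥ u ≤ √(u ⬝ᵥ H *ᵥ u) * √(w ⬝ᵥ H *ᵥ w) :=
    huw ▸ hH.dotProduct_mulVec_le_sqrt_mul_sqrt u w
  have hcmp := hlow.mul_dotProduct_mulVec_le_of_sub_smul u
  have h1ε : 0 ≤ 1 - ε := by linarith
  have hs : (1 - ε) * √(u ⬝ᵥ H *ᵥ u) ≤ √(w ⬝ᵥ H *ᵥ w) := by
    refine mul_le_of_mul_sq_le_mul (Real.sqrt_nonneg _) (Real.sqrt_nonneg _) ?_
    rw [Real.sq_sqrt (hH.dotProduct_mulVec_self_nonneg u), mul_comm (√_)]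
    linarith
  calc (1 - ε) * (u ⬝ᵥ Ht *ᵥ u) ≤ (1 - ε) * (√(u ⬝ᵥ H *ᵥ u) * √(w ⬝ᵥ H *ᵥ w)) :=
        mul_le_mul_of_nonneg_left hcs h1ε
    _ = (1 - ε) * √(u ⬝ᵥ H *ᵥ u) * √(w ⬝ᵥ H *ᵥ w) := (mul_assoc ..).symm
    _ ≤ √(w ⬝ᵥ H *ᵥ w) * √(w ⬝ᵥ H *ᵥ w) := mul_le_mul_of_nonneg_right hs (Real.sqrt_nonneg _)
    _ = w ⬝ᵥ H *ᵥ w := Real.mul_self_sqrt (hH.dotProduct_mulVec_self_nonneg w)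

theorem sqrt_dotProduct_mulVec_le_of_relative_error (hH : H.PosSemidef) (hε : ε < 1)
    (hlow : (Ht - (1 - ε) • H).PosSemidef) {ε₀ : ℝ} (hε₀ : 0 ≤ ε₀) {u w e : n → ℝ}
    (huw : Ht *ᵥ u = H *ᵥ w) (he : √(e ⬝ᵥ Ht *ᵥ e) ≤ ε₀ * √(u ⬝ᵥ Ht *ᵥ u)) :
    √(e ⬝ᵥ H *ᵥ e) ≤ ε₀ / (1 - ε) * √(w ⬝ᵥ H *ᵥ w) := by
  have h1ε : 0 < 1 - ε := by linarith
  have hcmp_e := hlow.mul_dotProduct_mulVec_le_of_sub_smul e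
  have hcmp_u := hlow.mul_dotProduct_mulVec_le_of_sub_smul u
  have hu := one_sub_mul_dotProduct_mulVec_le_of_mulVec_eq hH hε.le hlow huw
  have hu0 : 0 ≤ u ⬝ᵥ Ht *ᵥ u :=
    (mul_nonneg h1ε.le (hH.dotProduct_mulVec_self_nonneg u)).trans hcmp_u
  have he2 : e ⬝ᵥ Ht *ᵥ e ≤ ε₀ ^ 2 * (u ⬝ᵥ Ht *ᵥ u) := by
    rwa [← Real.sq_sqrt hu0, ← mul_pow, ← Real.sqrt_le_left (by positivity)]
  have hsq : ((1 - ε) * √(e ⬝ᵥ H *ᵥ e)) ^ 2 ≤ (ε₀ * √(w ⬝ᵥ H *ᵥ w)) ^ 2 := by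
    rw [mul_pow, mul_pow, Real.sq_sqrt (hH.dotProduct_mulVec_self_nonneg e),
      Real.sq_sqrt (hH.dotProduct_mulVec_self_nonneg w)]
    nlinarith [mul_le_mul_of_nonneg_left he2 h1ε.le, mul_le_mul_of_nonneg_left hu (sq_nonneg ε₀)]
  rw [div_mul_eq_mul_div, le_div_iff₀ h1ε, mul_comm]
  exact (pow_le_pow_iff_left₀ (by positivity) (by positivity) two_ne_zero).mp hsq

theorem sqrt_dotProduct_mulVec_sub_le_of_approx (hH : H.PosSemidef) (hε : 0 ≤ ε) (hε1 : ε < 1)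
    (hlow : (Ht - (1 - ε) • H).PosSemidef) (hup : ((1 + ε) • H - Ht).PosSemidef)
    {u w : n → ℝ} (huw : Ht *ᵥ u = H *ᵥ w) :
    √((u - w) ⬝ᵥ H *ᵥ (u - w)) ≤ ε / (1 - ε) * √(w ⬝ᵥ H *ᵥ w) := by
  set v := u - w
  have hv : Ht *ᵥ v = (H - Ht) *ᵥ w := by simp only [v, mulVec_sub, sub_mulVec, huw]
  have h : (1 - ε) * (v ⬝ᵥ H *ᵥ v) ≤ ε * √(w ⬝ᵥ H *ᵥ w) * √(v ⬝ᵥ H *ᵥ v) :=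
    calc (1 - ε) * (v ⬝ᵥ H *ᵥ v) ≤ v ⬝ᵥ Ht *ᵥ v := hlow.mul_dotProduct_mulVec_le_of_sub_smul v
      _ = v ⬝ᵥ (H - Ht) *ᵥ w := by rw [hv]
      _ ≤ ε * √(v ⬝ᵥ H *ᵥ v) * √(w ⬝ᵥ H *ᵥ w) :=
        dotProduct_sub_mulVec_le_of_approx hε hlow hup v w
      _ = ε * √(w ⬝ᵥ H *ᵥ w) * √(v ⬝ᵥ H *ᵥ v) := mul_right_comm ..
  rw [div_mul_eq_mul_div, le_div_iff₀ (by linarith), mul_comm]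
  refine mul_le_of_mul_sq_le_mul (Real.sqrt_nonneg _) (by positivity) ?_
  rwa [Real.sq_sqrt (hH.dotProduct_mulVec_self_nonneg v)]

end Approximation

end Matrix

/-- an inexact solution `p̃′` of `H̃p = g` meeting the relative stopping
condition `‖H̃^{1/2}(p̃′ − p̃)‖₂ ≤ ε₀‖H̃^{1/2}p̃‖₂` is close to the exact Newton
direction `p* = H⁻¹g` in the `H`-weighted norm. -/
theorem inexact_newton_direction_weighted_bound {d : ℕ}
    (H Htil : Matrix (Fin d) (Fin d) ℝ) (hH : H.PosDef) (hHtil : Htil.PosDef)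
    (ε : ℝ) (hε : 0 < ε ∧ ε < 1)
    (happrox : (Htil - (1 - ε) • H).PosSemidef ∧ ((1 + ε) • H - Htil).PosSemidef)
    (g : Fin d → ℝ)
    (ε₀ : ℝ) (hε₀ : 0 < ε₀ ∧ ε₀ < 1)
    (ptil' : Fin d → ℝ)
    (hstop : norm2 (hHtil.posSemidef.sqrt *ᵥ (ptil' - Htil⁻¹ *ᵥ g)) ≤
      ε₀ * norm2 (hHtil.posSemidef.sqrt *ᵥ (Htil⁻¹ *ᵥ g))) :
    norm2 (hH.posSemidef.sqrt *ᵥ (ptil' - H⁻¹ *ᵥ g)) ≤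
      ((ε₀ + ε) / (1 - ε)) * norm2 (hH.posSemidef.sqrt *ᵥ (H⁻¹ *ᵥ g)) := by
  obtain ⟨hlow, hup⟩ := happrox
  set pstar := H⁻¹ *ᵥ g
  set ptil := Htil⁻¹ *ᵥ g
  have hsolve : Htil *ᵥ ptil = H *ᵥ pstar := by
    rw [hHtil.mulVec_inv_mulVec, hH.mulVec_inv_mulVec]
  simp only [hH.posSemidef.norm2_sqrt_mulVec, hHtil.posSemidef.norm2_sqrt_mulVec] at hstop ⊢
  calc √((ptil' - pstar) ⬝ᵥ H *ᵥ (ptil' - pstar))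
      = √((ptil' - ptil + (ptil - pstar)) ⬝ᵥ H *ᵥ (ptil' - ptil + (ptil - pstar))) := by
        rw [sub_add_sub_cancel]
    _ ≤ √((ptil' - ptil) ⬝ᵥ H *ᵥ (ptil' - ptil)) + √((ptil - pstar) ⬝ᵥ H *ᵥ (ptil - pstar)) :=
        hH.posSemidef.sqrt_dotProduct_mulVec_add_le _ _
    _ ≤ ε₀ / (1 - ε) * √(pstar ⬝ᵥ H *ᵥ pstar) + ε / (1 - ε) * √(pstar ⬝ᵥ H *ᵥ pstar) :=
        add_le_add
          (sqrt_dotProduct_mulVec_le_of_relative_error hH.posSemidef hε.2 hlow hε₀.1.le hsolve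
            hstop)
          (sqrt_dotProduct_mulVec_sub_le_of_approx hH.posSemidef hε.1.le hε.2 hlow hup hsolve)
    _ = (ε₀ + ε) / (1 - ε) * √(pstar ⬝ᵥ H *ᵥ pstar) := by ring
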